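/- Let p : ℝ² → ℝ be twice continuously differentiable, let n(φ, ψ) = (sin φ sin ψ, cos φ sin ψ, cos ψ), and for ψ ∈ (0, π) define x_p(φ, ψ) = p n + ( ∂_φ p / sin² ψ ) ∂_φ n + ∂_ψ p ∂_ψ n. Then the partial derivatives of x_p satisfy, for all φ ∈ ℝ and ψ ∈ (0, π): ∂_φ x_p = ( p + p_{φφ}/sin² ψ + p_ψ cos ψ / sin ψ ) ∂_φ n + ( p_{ψφ} - p_φ cos ψ / sin ψ ) ∂_ψ n and ∂_ψ x_p = ( p_{φψ}/sin² ψ - p_φ cos ψ / sin³ ψ ) ∂_φ n + ( p + p_{ψψ} ) ∂_ψ n, where subscripts on p denote partial derivatives. -/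

import Mathlib

open Real

/-- Point of `ℝ³` (with the Euclidean norm) with coordinates `a, b, c`. -/
noncomputable def e3 (a b c : ℝ) : EuclideanSpace ℝ (Fin 3) :=
  (WithLp.equiv 2 (Fin 3 → ℝ)).symm ![a, b, c]

theorem hasDerivAt_e3 {f g h : ℝ → ℝ} {f' g' h' : ℝ} {x : ℝ}
    (hf : HasDerivAt f f' x) (hg : HasDerivAt g g' x) (hh : HasDerivAt h h' x) :
    HasDerivAt (fun t => e3 (f t) (g t) (h t)) (e3 f' g' h') x := by
  have hpi : HasDerivAt (fun t => (![f t, g t, h t] : Fin 3 → ℝ)) ![f', g', h'] x := by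
    rw [hasDerivAt_pi]
    intro i
    fin_cases i <;> simpa
  have := ((EuclideanSpace.equiv (Fin 3) ℝ).symm.toContinuousLinearMap).hasFDerivAt.comp_hasDerivAt x hpi
  exact this

theorem e3_smul (r a b c : ℝ) : r • e3 a b c = e3 (r*a) (r*b) (r*c) := by
  ext i; fin_cases i <;> simp [e3]

theorem e3_add (a b c a' b' c' : ℝ) : e3 a b c + e3 a' b' c' = e3 (a+a') (b+b') (c+c') := by
  ext i; fin_cases i <;> simp [e3]

theorem e3_eq {a b c a' b' c' : ℝ} (h1 : a = a') (h2 : b = b') (h3 : c = c') :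
    e3 a b c = e3 a' b' c' := by rw [h1, h2, h3]

/-- For a `C²` function `p` in spherical coordinates, the partial derivatives of
the boundary parametrization `x_p = p n + (p_φ / sin² ψ) n_φ + p_ψ n_ψ` are
`∂_φ x_p = (p + p_φφ/sin²ψ + p_ψ cos ψ/sin ψ) n_φ + (p_ψφ - p_φ cos ψ/sin ψ) n_ψ` and
`∂_ψ x_p = (p_φψ/sin²ψ - p_φ cos ψ/sin³ψ) n_φ + (p + p_ψψ) n_ψ`. -/
theorem support_param_differential (p : ℝ → ℝ → ℝ)
    (hp : ContDiff ℝ 2 (fun q : ℝ × ℝ => p q.1 q.2))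
    (pφ pψ pφφ pψψ pφψ pψφ : ℝ → ℝ → ℝ)
    (hpφ : ∀ φ ψ, pφ φ ψ = deriv (fun t => p t ψ) φ)
    (hpψ : ∀ φ ψ, pψ φ ψ = deriv (fun t => p φ t) ψ)
    (hpφφ : ∀ φ ψ, pφφ φ ψ = deriv (fun t => pφ t ψ) φ)
    (hpψψ : ∀ φ ψ, pψψ φ ψ = deriv (fun t => pψ φ t) ψ)
    (hpφψ : ∀ φ ψ, pφψ φ ψ = deriv (fun t => pφ φ t) ψ)
    (hpψφ : ∀ φ ψ, pψφ φ ψ = deriv (fun t => pψ t ψ) φ)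
    (n : ℝ → ℝ → EuclideanSpace ℝ (Fin 3))
    (hn : ∀ φ ψ, n φ ψ = e3 (sin φ * sin ψ) (cos φ * sin ψ) (cos ψ))
    (nφ nψ : ℝ → ℝ → EuclideanSpace ℝ (Fin 3))
    (hnφ : ∀ φ ψ, nφ φ ψ = deriv (fun t => n t ψ) φ)
    (hnψ : ∀ φ ψ, nψ φ ψ = deriv (fun t => n φ t) ψ)
    (xp : ℝ → ℝ → EuclideanSpace ℝ (Fin 3))
    (hxp : ∀ φ ψ, xp φ ψ =
        p φ ψ • n φ ψ + (pφ φ ψ / (sin ψ) ^ 2) • nφ φ ψ + pψ φ ψ • nψ φ ψ)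
    (φ ψ : ℝ) (hψ : ψ ∈ Set.Ioo 0 π) :
    deriv (fun t => xp t ψ) φ =
        (p φ ψ + pφφ φ ψ / (sin ψ) ^ 2 + pψ φ ψ * cos ψ / sin ψ) • nφ φ ψ
          + (pψφ φ ψ - pφ φ ψ * cos ψ / sin ψ) • nψ φ ψ ∧
      deriv (fun t => xp φ t) ψ =
        (pφψ φ ψ / (sin ψ) ^ 2 - pφ φ ψ * cos ψ / (sin ψ) ^ 3) • nφ φ ψ
          + (p φ ψ + pψψ φ ψ) • nψ φ ψ := by
  have hs : sin ψ ≠ 0 := ne_of_gt (sin_pos_of_pos_of_lt_pi hψ.1 hψ.2)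
  set P : ℝ × ℝ → ℝ := fun q => p q.1 q.2 with hPdef
  have hfd : Differentiable ℝ P := hp.differentiable (by norm_num)
  have h1 : ∀ a b : ℝ, HasDerivAt (fun t => p t b) (fderiv ℝ P (a,b) (1,0)) a := by
    intro a b
    have hab : HasDerivAt (fun t : ℝ => ((t, b) : ℝ × ℝ)) (1, 0) a :=
      HasDerivAt.prodMk (hasDerivAt_id a) (hasDerivAt_const a b)
    exact ((hfd (a,b)).hasFDerivAt).comp_hasDerivAt a hab
  have h2 : ∀ a b : ℝ, HasDerivAt (fun t => p a t) (fderiv ℝ P (a,b) (0,1)) b := by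
    intro a b
    have hab : HasDerivAt (fun t : ℝ => ((a, t) : ℝ × ℝ)) (0, 1) b :=
      HasDerivAt.prodMk (hasDerivAt_const b a) (hasDerivAt_id b)
    exact ((hfd (a,b)).hasFDerivAt).comp_hasDerivAt b hab
  have hF : ContDiff ℝ 1 (fderiv ℝ P) := hp.fderiv_right (by norm_num)
  have hFd : Differentiable ℝ (fderiv ℝ P) := hF.differentiable one_ne_zero
  have hD1 : ∀ (b : ℝ) (v : ℝ × ℝ), Differentiable ℝ (fun t => fderiv ℝ P (t, b) v) :=
    fun b v => (hFd.comp (differentiable_id.prodMk (differentiable_const b))).clm_apply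
      (differentiable_const v)
  have hD2 : ∀ (a : ℝ) (v : ℝ × ℝ), Differentiable ℝ (fun t => fderiv ℝ P (a, t) v) :=
    fun a v => (hFd.comp ((differentiable_const a).prodMk differentiable_id)).clm_apply
      (differentiable_const v)
  have hpφ' : ∀ a b : ℝ, pφ a b = fderiv ℝ P (a,b) (1,0) :=
    fun a b => (hpφ a b).trans (h1 a b).deriv
  have hpψ' : ∀ a b : ℝ, pψ a b = fderiv ℝ P (a,b) (0,1) :=
    fun a b => (hpψ a b).trans (h2 a b).deriv
  -- first-order facts
  have Hp1 : HasDerivAt (fun t => p t ψ) (pφ φ ψ) φ := by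
    rw [hpφ' φ ψ]; exact h1 φ ψ
  have Hp2 : HasDerivAt (fun t => p φ t) (pψ φ ψ) ψ := by
    rw [hpψ' φ ψ]; exact h2 φ ψ
  -- second-order facts
  have Hpφ1 : HasDerivAt (fun t => pφ t ψ) (pφφ φ ψ) φ := by
    have he : (fun t => pφ t ψ) = fun t => fderiv ℝ P (t, ψ) (1,0) := funext fun t => hpφ' t ψ
    rw [hpφφ, he]; exact ((hD1 ψ (1,0)) φ).hasDerivAt
  have Hpφ2 : HasDerivAt (fun t => pφ φ t) (pφψ φ ψ) ψ := by
    have he : (fun t => pφ φ t) = fun t => fderiv ℝ P (φ, t) (1,0) := funext fun t => hpφ' φ t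
    rw [hpφψ, he]; exact ((hD2 φ (1,0)) ψ).hasDerivAt
  have Hpψ1 : HasDerivAt (fun t => pψ t ψ) (pψφ φ ψ) φ := by
    have he : (fun t => pψ t ψ) = fun t => fderiv ℝ P (t, ψ) (0,1) := funext fun t => hpψ' t ψ
    rw [hpψφ, he]; exact ((hD1 ψ (0,1)) φ).hasDerivAt
  have Hpψ2 : HasDerivAt (fun t => pψ φ t) (pψψ φ ψ) ψ := by
    have he : (fun t => pψ φ t) = fun t => fderiv ℝ P (φ, t) (0,1) := funext fun t => hpψ' φ t
    rw [hpψψ, he]; exact ((hD2 φ (0,1)) ψ).hasDerivAt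
  -- explicit formulas for nφ and nψ
  have hnφ' : ∀ a b : ℝ, nφ a b = e3 (cos a * sin b) (-sin a * sin b) 0 := by
    intro a b
    rw [hnφ]
    have he : (fun t => n t b) = fun t => e3 (sin t * sin b) (cos t * sin b) (cos b) :=
      funext fun t => hn t b
    rw [he]
    exact (hasDerivAt_e3 ((hasDerivAt_sin a).mul_const (sin b))
      ((hasDerivAt_cos a).mul_const (sin b)) (hasDerivAt_const a (cos b))).deriv
  have hnψ' : ∀ a b : ℝ, nψ a b = e3 (sin a * cos b) (cos a * cos b) (-sin b) := by
    intro a b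
    rw [hnψ]
    have he : (fun t => n a t) = fun t => e3 (sin a * sin t) (cos a * sin t) (cos t) :=
      funext fun t => hn a t
    rw [he]
    exact (hasDerivAt_e3 ((hasDerivAt_sin b).const_mul (sin a))
      ((hasDerivAt_sin b).const_mul (cos a)) (hasDerivAt_cos b)).deriv
  constructor
  · -- φ-derivative
    have hxφ : (fun t => xp t ψ) = fun t =>
        e3 (p t ψ * (sin t * sin ψ) + pφ t ψ / sin ψ ^ 2 * (cos t * sin ψ)
              + pψ t ψ * (sin t * cos ψ))
           (p t ψ * (cos t * sin ψ) + pφ t ψ / sin ψ ^ 2 * (-sin t * sin ψ)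
              + pψ t ψ * (cos t * cos ψ))
           (p t ψ * cos ψ + pφ t ψ / sin ψ ^ 2 * 0 + pψ t ψ * -sin ψ) := by
      funext t
      rw [hxp, hn, hnφ', hnψ', e3_smul, e3_smul, e3_smul, e3_add, e3_add]
    have hd1 := ((Hp1.mul ((hasDerivAt_sin φ).mul_const (sin ψ))).add
      ((Hpφ1.div_const (sin ψ ^ 2)).mul ((hasDerivAt_cos φ).mul_const (sin ψ)))).add
      (Hpψ1.mul ((hasDerivAt_sin φ).mul_const (cos ψ)))
    have hd2 := ((Hp1.mul ((hasDerivAt_cos φ).mul_const (sin ψ))).add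
      ((Hpφ1.div_const (sin ψ ^ 2)).mul (((hasDerivAt_sin φ).neg).mul_const (sin ψ)))).add
      (Hpψ1.mul ((hasDerivAt_cos φ).mul_const (cos ψ)))
    have hd3 := ((Hp1.mul_const (cos ψ)).add
      ((Hpφ1.div_const (sin ψ ^ 2)).mul_const 0)).add (Hpψ1.mul_const (-sin ψ))
    have HX := hasDerivAt_e3 hd1 hd2 hd3
    simp only [Pi.add_apply, Pi.mul_apply, Pi.neg_apply, Pi.div_apply] at HX
    rw [hxφ, HX.deriv, hnφ', hnψ', e3_smul, e3_smul, e3_add]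
    apply e3_eq
    · field_simp
      linear_combination (pφ φ ψ * sin φ) * sin_sq_add_cos_sq ψ
    · field_simp
      linear_combination (pφ φ ψ * cos φ) * sin_sq_add_cos_sq ψ
    · field_simp
      ring
  · -- ψ-derivative
    have hs2 : sin ψ ^ 2 ≠ 0 := pow_ne_zero 2 hs
    have hxψ : (fun t => xp φ t) = fun t =>
        e3 (p φ t * (sin φ * sin t) + pφ φ t / sin t ^ 2 * (cos φ * sin t)
              + pψ φ t * (sin φ * cos t))
           (p φ t * (cos φ * sin t) + pφ φ t / sin t ^ 2 * (-sin φ * sin t)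
              + pψ φ t * (cos φ * cos t))
           (p φ t * cos t + pφ φ t / sin t ^ 2 * 0 + pψ φ t * -sin t) := by
      funext t
      rw [hxp, hn, hnφ', hnψ', e3_smul, e3_smul, e3_smul, e3_add, e3_add]
    have Hsin2 : HasDerivAt (fun t => sin t ^ 2) (2 * sin ψ ^ 1 * cos ψ) ψ := by
      simpa [Pi.pow_def] using (hasDerivAt_sin ψ).pow 2
    have hdiv := Hpφ2.div Hsin2 hs2
    have hd1 := ((Hp2.mul ((hasDerivAt_sin ψ).const_mul (sin φ))).add
      (hdiv.mul ((hasDerivAt_sin ψ).const_mul (cos φ)))).add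
      (Hpψ2.mul ((hasDerivAt_cos ψ).const_mul (sin φ)))
    have hd2 := ((Hp2.mul ((hasDerivAt_sin ψ).const_mul (cos φ))).add
      (hdiv.mul ((hasDerivAt_sin ψ).const_mul (-sin φ)))).add
      (Hpψ2.mul ((hasDerivAt_cos ψ).const_mul (cos φ)))
    have hd3 := ((Hp2.mul (hasDerivAt_cos ψ)).add
      (hdiv.mul_const 0)).add (Hpψ2.mul ((hasDerivAt_sin ψ).neg))
    have HX := hasDerivAt_e3 hd1 hd2 hd3
    simp only [Pi.add_apply, Pi.mul_apply, Pi.neg_apply, Pi.div_apply] at HX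
    rw [hxψ, HX.deriv, hnφ', hnψ', e3_smul, e3_smul, e3_add]
    apply e3_eq
    · field_simp
      ring
    · field_simp
      ring
    · field_simp
      ring
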